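/- arXiv:2008.01931 — 5 statements merged into one kernel-verified Lean document; each statement's English description precedes it below -/
import Mathlib

section
/- If X and Y are independent Rayleigh random variables with scale parameter 1, then the product A = XY has probability density f_A(x) = x ∫_0^∞ e^{−x cosh u} du for x > 0; that is, for every Borel set S ⊆ (0,∞), P(XY ∈ S) = ∫_S x (∫_0^∞ e^{−x cosh u} du) dx. -/
/-!
The density of a product `XY` of independent variables with densities `f`, `g` is
`z ↦ ∫ f x g (z / x) / |x| dx` (Tonelli plus the scaling `y = z / x`). For Rayleigh densities
the substitution `x = e^{(u + log z)/2} = √z e^{u/2}` turns `x² + z²/x²` into `2 z cosh u`, so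
the integral becomes `(z / 2) ∫_ℝ e^{-z cosh u} du = z ∫_0^∞ e^{-z cosh u} du` by evenness of
`cosh`.
-/

open Real MeasureTheory ProbabilityTheory Set

/-- A random variable `X` is Rayleigh distributed with scale parameter 1 if it is measurable
and its law has density `x ↦ x * exp (-x² / 2)` with respect to Lebesgue measure. -/
def IsRayleigh {Ω : Type*} [MeasurableSpace Ω] (μ : Measure Ω) (X : Ω → ℝ) : Prop :=
  Measurable X ∧
    Measure.map X μ =
      MeasureTheory.volume.withDensity fun x => ENNReal.ofReal (x * Real.exp (-x ^ 2 / 2))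

open scoped ENNReal

theorem lintegral_comp_mul_left {h : ℝ → ℝ≥0∞} (hh : Measurable h) {a : ℝ} (ha : a ≠ 0) :
    ∫⁻ y, h (a * y) = ENNReal.ofReal |a⁻¹| * ∫⁻ z, h z := by
  rw [← lintegral_map hh (measurable_const_mul a), Real.map_volume_mul_left ha,
    lintegral_smul_measure, smul_eq_mul]

theorem prod_withDensity_apply_mul_mem {f g : ℝ → ℝ≥0∞} (hf : Measurable f) (hg : Measurable g)
    {S : Set ℝ} (hS : MeasurableSet S) :
    ((volume.withDensity f).prod (volume.withDensity g)) {p : ℝ × ℝ | p.1 * p.2 ∈ S} =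
      ∫⁻ z in S, ∫⁻ x, ENNReal.ofReal |x⁻¹| * (f x * g (z / x)) := by
  set A := {p : ℝ × ℝ | p.1 * p.2 ∈ S}
  have hA : MeasurableSet A := (measurable_fst.mul measurable_snd) hS
  have fiber : ∀ x ≠ 0, ∫⁻ y, A.indicator (fun p => f p.1 * g p.2) (x, y) =
      ∫⁻ z in S, ENNReal.ofReal |x⁻¹| * (f x * g (z / x)) := by
    intro x hx
    calc ∫⁻ y, A.indicator (fun p => f p.1 * g p.2) (x, y)
        = ∫⁻ y, S.indicator (fun z => f x * g (z / x)) (x * y) := by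
          refine lintegral_congr fun y => ?_
          by_cases hy : x * y ∈ S <;> simp [A, indicator, hy, mul_div_cancel_left₀ _ hx]
      _ = ENNReal.ofReal |x⁻¹| * ∫⁻ z in S, f x * g (z / x) := by
          rw [lintegral_comp_mul_left (by fun_prop) hx, lintegral_indicator hS]
      _ = ∫⁻ z in S, ENNReal.ofReal |x⁻¹| * (f x * g (z / x)) :=
          (lintegral_const_mul _ (by fun_prop)).symm
  rw [prod_withDensity hf hg, withDensity_apply _ hA, ← lintegral_indicator hA,
    lintegral_prod _ (by fun_prop)]
  calc ∫⁻ x, ∫⁻ y, A.indicator (fun p => f p.1 * g p.2) (x, y)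
      = ∫⁻ x, ∫⁻ z in S, ENNReal.ofReal |x⁻¹| * (f x * g (z / x)) :=
        lintegral_congr_ae <| (volume.ae_ne 0).mono fiber
    _ = _ := lintegral_lintegral_swap (by fun_prop)

theorem ProbabilityTheory.IndepFun.measure_mul_mem_eq_lintegral {Ω : Type*} [MeasurableSpace Ω]
    {μ : Measure Ω} [IsFiniteMeasure μ]
    {X Y : Ω → ℝ} {f g : ℝ → ℝ≥0∞} (hXY : IndepFun X Y μ) (hX : Measurable X) (hY : Measurable Y)
    (hf : Measurable f) (hg : Measurable g) (hXf : μ.map X = volume.withDensity f)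
    (hYg : μ.map Y = volume.withDensity g) {S : Set ℝ} (hS : MeasurableSet S) :
    μ {ω | X ω * Y ω ∈ S} = ∫⁻ z in S, ∫⁻ x, ENNReal.ofReal |x⁻¹| * (f x * g (z / x)) := by
  have hA : MeasurableSet {p : ℝ × ℝ | p.1 * p.2 ∈ S} := (measurable_fst.mul measurable_snd) hS
  rw [← prod_withDensity_apply_mul_mem hf hg hS, ← hXf, ← hYg,
    ← (indepFun_iff_map_prod_eq_prod_map_map hX.aemeasurable hY.aemeasurable).mp hXY,
    Measure.map_apply (hX.prodMk hY) hA]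
  rfl

theorem lintegral_eq_two_mul_setLIntegral_Ioi_of_even {f : ℝ → ℝ≥0∞} (hf : ∀ x, f (-x) = f x) :
    ∫⁻ x, f x = 2 * ∫⁻ x in Ioi 0, f x := by
  have hIio : ∫⁻ x in Iio 0, f x = ∫⁻ x in Ioi 0, f x := by
    rw [← (Measure.measurePreserving_neg volume).setLIntegral_comp_preimage_emb
      (Homeomorph.neg ℝ).measurableEmbedding, neg_preimage, neg_Iio, neg_zero]
    simp only [hf]
  rw [← lintegral_add_compl _ measurableSet_Iio, compl_Iio, setLIntegral_congr Ioi_ae_eq_Ici.symm,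
    hIio, two_mul]

noncomputable def rayleighPDF (x : ℝ) : ℝ≥0∞ := ENNReal.ofReal (x * exp (-x ^ 2 / 2))

theorem measurable_rayleighPDF : Measurable rayleighPDF := by
  unfold rayleighPDF; fun_prop

theorem rayleighPDF_of_nonpos {x : ℝ} (hx : x ≤ 0) : rayleighPDF x = 0 :=
  ENNReal.ofReal_of_nonpos (mul_nonpos_of_nonpos_of_nonneg hx (exp_pos _).le)

theorem rayleighPDF_mul_rayleighPDF_div_of_sq_eq {x z u : ℝ} (hx : 0 < x) (hz : 0 < z)
    (hxz : x ^ 2 = z * exp u) :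
    ENNReal.ofReal (x / 2) * (ENNReal.ofReal x⁻¹ * (rayleighPDF x * rayleighPDF (z / x))) =
      ENNReal.ofReal (z / 2) * ENNReal.ofReal (exp (-(z * cosh u))) := by
  have hexp : exp (-x ^ 2 / 2) * exp (-(z / x) ^ 2 / 2) = exp (-(z * cosh u)) := by
    have hzx : (z / x) ^ 2 = z * exp (-u) := by
      rw [div_pow, hxz, exp_neg]
      field_simp
    rw [← exp_add, hxz, hzx, cosh_eq]
    ring_nf
  simp only [rayleighPDF]
  rw [← ENNReal.ofReal_mul (by positivity), ← ENNReal.ofReal_mul (by positivity),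
    ← ENNReal.ofReal_mul (by positivity), ← ENNReal.ofReal_mul (by positivity), ← hexp]
  congr 1
  field_simp

theorem lintegral_rayleighPDF_mul_rayleighPDF_div {z : ℝ} (hz : 0 < z) :
    ∫⁻ x, ENNReal.ofReal |x⁻¹| * (rayleighPDF x * rayleighPDF (z / x)) =
      ENNReal.ofReal z * ∫⁻ u in Ioi 0, ENNReal.ofReal (exp (-(z * cosh u))) := by
  set φ : ℝ → ℝ := fun u => exp ((u + log z) / 2)
  have hφ_pos : ∀ u, 0 < φ u := fun u => exp_pos _
  have hφ_sq : ∀ u, φ u ^ 2 = z * exp u := fun u => by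
    rw [← exp_nat_mul, Nat.cast_ofNat, mul_div_cancel₀ _ two_ne_zero, exp_add, exp_log hz,
      mul_comm]
  have hφ_range : φ '' univ = Ioi 0 := by
    rw [image_univ, ← range_exp]
    exact Function.Surjective.range_comp (fun y => ⟨2 * y - log z, by ring⟩) exp
  have hφ_deriv : ∀ u, HasDerivAt φ (φ u / 2) u := fun u =>
    (((hasDerivAt_id u).add_const (log z)).div_const 2).exp.congr_deriv (by simp [φ]; ring)
  have hφ_inj : φ.Injective := fun u v h => by
    have := exp_injective h
    linarith
  calc ∫⁻ x, ENNReal.ofReal |x⁻¹| * (rayleighPDF x * rayleighPDF (z / x))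
      = ∫⁻ x in Ioi 0, ENNReal.ofReal |x⁻¹| * (rayleighPDF x * rayleighPDF (z / x)) := by
        refine (setLIntegral_eq_of_support_subset fun x hx => ?_).symm
        by_contra hx0
        exact hx (by simp [rayleighPDF_of_nonpos (not_lt.mp hx0)])
    _ = ∫⁻ u, ENNReal.ofReal |φ u / 2| *
          (ENNReal.ofReal |(φ u)⁻¹| * (rayleighPDF (φ u) * rayleighPDF (z / φ u))) := by
        rw [← hφ_range, lintegral_image_eq_lintegral_abs_deriv_mul MeasurableSet.univ
          (fun u _ => (hφ_deriv u).hasDerivWithinAt) hφ_inj.injOn, Measure.restrict_univ]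
    _ = ∫⁻ u, ENNReal.ofReal (z / 2) * ENNReal.ofReal (exp (-(z * cosh u))) := by
        refine lintegral_congr fun u => ?_
        rw [abs_of_pos (by positivity), abs_of_pos (inv_pos.mpr (hφ_pos u))]
        exact rayleighPDF_mul_rayleighPDF_div_of_sq_eq (hφ_pos u) hz (hφ_sq u)
    _ = ENNReal.ofReal z * ∫⁻ u in Ioi 0, ENNReal.ofReal (exp (-(z * cosh u))) := by
        rw [lintegral_const_mul _ (by fun_prop),
          lintegral_eq_two_mul_setLIntegral_Ioi_of_even (by simp [cosh_neg]), ← mul_assoc,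
          ← ENNReal.ofReal_ofNat, ← ENNReal.ofReal_mul (by positivity)]
        norm_num

theorem integrableOn_exp_neg_mul_cosh {z : ℝ} (hz : 0 < z) :
    IntegrableOn (fun u => exp (-(z * cosh u))) (Ioi 0) := by
  refine (exp_neg_integrableOn_Ioi 0 hz).mono' (by fun_prop) <|
    (ae_restrict_iff' measurableSet_Ioi).mpr (ae_of_all _ fun u hu => ?_)
  have hu_le_cosh : u ≤ cosh u := (self_le_sinh_iff.mpr hu.le).trans (sinh_lt_cosh u).le
  rw [norm_of_nonneg (exp_pos _).le, exp_le_exp]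
  nlinarith

theorem ofReal_integral_exp_neg_mul_cosh {z : ℝ} (hz : 0 < z) :
    ENNReal.ofReal (∫ u in Ioi 0, exp (-(z * cosh u))) =
      ∫⁻ u in Ioi 0, ENNReal.ofReal (exp (-(z * cosh u))) :=
  ofReal_integral_eq_lintegral_ofReal (integrableOn_exp_neg_mul_cosh hz)
    (ae_of_all _ fun _ => (exp_pos _).le)

theorem measurable_integral_exp_neg_mul_cosh :
    Measurable fun z : ℝ => ∫ u in Ioi 0, exp (-(z * cosh u)) :=
  (StronglyMeasurable.integral_prod_right'
    (f := fun p : ℝ × ℝ => exp (-(p.1 * cosh p.2))) (by fun_prop)).measurable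

/-- If `X` and `Y` are independent Rayleigh(1) random variables, then the product `X * Y` has
the double Rayleigh density `f x = x * ∫ u in (0,∞), exp (-x * cosh u) du = x * K₀ x` on
`(0, ∞)`: for every Borel set `S ⊆ (0, ∞)`,
`P (X * Y ∈ S) = ∫ x in S, x * ∫ u in (0,∞), exp (-x * cosh u) du dx`. -/
theorem double_rayleigh_density {Ω : Type*} [MeasurableSpace Ω]
    (μ : Measure Ω) [IsProbabilityMeasure μ]
    (X Y : Ω → ℝ) (hX : IsRayleigh μ X) (hY : IsRayleigh μ Y) (hXY : IndepFun X Y μ)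
    (S : Set ℝ) (hS : MeasurableSet S) (hS0 : S ⊆ Ioi 0) :
    μ {ω | X ω * Y ω ∈ S} =
      ENNReal.ofReal
        (∫ x in S, x * ∫ u in Ioi (0 : ℝ), Real.exp (-(x * Real.cosh u))) := by
  obtain ⟨hXm, hXlaw⟩ := hX
  obtain ⟨hYm, hYlaw⟩ := hY
  have hprob : μ {ω | X ω * Y ω ∈ S} =
      ∫⁻ z in S, ENNReal.ofReal (z * ∫ u in Ioi 0, exp (-(z * cosh u))) := by
    rw [hXY.measure_mul_mem_eq_lintegral hXm hYm measurable_rayleighPDF measurable_rayleighPDF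
      hXlaw hYlaw hS]
    refine setLIntegral_congr_fun hS fun z hz => ?_
    rw [lintegral_rayleighPDF_mul_rayleighPDF_div (hS0 hz),
      ← ofReal_integral_exp_neg_mul_cosh (hS0 hz), ← ENNReal.ofReal_mul (hS0 hz).le]
  have hnonneg : 0 ≤ᵐ[volume.restrict S] fun z => z * ∫ u in Ioi 0, exp (-(z * cosh u)) :=
    (ae_restrict_iff' hS).mpr <| ae_of_all _ fun z hz =>
      mul_nonneg (hS0 hz).le (integral_nonneg fun _ => (exp_pos _).le)
  rw [integral_eq_lintegral_of_nonneg_ae hnonneg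
      (measurable_id.mul measurable_integral_exp_neg_mul_cosh).aestronglyMeasurable,
    ← hprob, ENNReal.ofReal_toReal (measure_ne_top μ _)]
end

section
/- For every x > 0, ∫_0^∞ t^{−1} exp(−(t² + x²/t²)/2) dt = ∫_0^∞ exp(−x cosh u) du. -/
open Real MeasureTheory Set

/-!
The substitution `t = exp s` turns `dt / t` into `ds` on the whole line. Shifting `s` by
`log x / 2` balances the two terms of the exponent: `t² + x² / t² = 2 x cosh (2 s)`. Rescaling
`2 s` and folding the even integrand `exp (-(x cosh u))` onto the half-line gives the result.
-/

theorem integral_Ioi_inv_smul_eq_integral_comp_exp {E : Type*} [NormedAddCommGroup E]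
    [NormedSpace ℝ E] (g : ℝ → E) :
    ∫ t in Ioi (0 : ℝ), t⁻¹ • g t = ∫ s, g (exp s) := by
  have h := integral_image_eq_integral_abs_deriv_smul MeasurableSet.univ
    (fun s _ ↦ (hasDerivAt_exp s).hasDerivWithinAt) exp_injective.injOn (fun t ↦ t⁻¹ • g t)
  rw [image_univ, range_exp] at h
  simpa [abs_of_pos (exp_pos _), smul_smul, mul_inv_cancel₀ (exp_pos _).ne'] using h

theorem integral_eq_two_mul_integral_Ioi_of_even {f : ℝ → ℝ} (hf : f.Even) :
    ∫ x, f x = 2 * ∫ x in Ioi (0 : ℝ), f x := by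
  rw [← integral_comp_abs]
  congr 1 with x
  rcases abs_choice x with h | h <;> rw [h]
  exact (hf x).symm

theorem exp_add_half_log_sq_add_sq_div (s : ℝ) {x : ℝ} (hx : 0 < x) :
    exp (s + log x / 2) ^ 2 + x ^ 2 / exp (s + log x / 2) ^ 2 = 2 * x * cosh (2 * s) := by
  have hsq : exp (s + log x / 2) ^ 2 = x * exp (2 * s) := by
    rw [← exp_nat_mul, Nat.cast_two, mul_add, mul_div_cancel₀ _ two_ne_zero, exp_add,
      exp_log hx, mul_comm]
  rw [hsq, cosh_eq, exp_neg]
  field_simp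

/-- For every `x > 0`, the Mellin-type convolution integral computing the density of the
product of two independent Rayleigh(1) random variables equals the integral representation
of the modified Bessel function `K₀`:
`∫ t in (0,∞), t⁻¹ * exp (-(t² + x²/t²)/2) dt = ∫ u in (0,∞), exp (-x * cosh u) du`. -/
theorem product_density_eq_besselK_integral (x : ℝ) (hx : 0 < x) :
    ∫ t in Ioi (0 : ℝ), t⁻¹ * Real.exp (-(t ^ 2 + x ^ 2 / t ^ 2) / 2) =
      ∫ u in Ioi (0 : ℝ), Real.exp (-(x * Real.cosh u)) := by
  set K : ℝ → ℝ := fun u ↦ exp (-(x * cosh u))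
  have hK : K.Even := fun u ↦ by simp only [K, cosh_neg]
  calc ∫ t in Ioi (0 : ℝ), t⁻¹ * exp (-(t ^ 2 + x ^ 2 / t ^ 2) / 2)
      = ∫ s, exp (-(exp s ^ 2 + x ^ 2 / exp s ^ 2) / 2) :=
        integral_Ioi_inv_smul_eq_integral_comp_exp (fun t ↦ exp (-(t ^ 2 + x ^ 2 / t ^ 2) / 2))
    _ = ∫ s, exp (-(exp (s + log x / 2) ^ 2 + x ^ 2 / exp (s + log x / 2) ^ 2) / 2) :=
        (integral_add_right_eq_self (fun s ↦ exp (-(exp s ^ 2 + x ^ 2 / exp s ^ 2) / 2)) _).symm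
    _ = ∫ s, K (2 * s) := by
        congr 1 with s
        rw [exp_add_half_log_sq_add_sq_div s hx]
        simp only [K]
        ring_nf
    _ = 2⁻¹ * ∫ u, K u := by
        rw [Measure.integral_comp_mul_left, abs_of_pos (by norm_num), smul_eq_mul]
    _ = ∫ u in Ioi (0 : ℝ), K u := by
        rw [integral_eq_two_mul_integral_Ioi_of_even hK, ← mul_assoc, inv_mul_cancel₀ two_ne_zero,
          one_mul]
end

section
/- Let a > −1 and b > 0, and let f(y) = y^a e^{−y/b}/(b^{a+1} Γ(a+1)) be the Gamma-type density on (0,∞). Then lim_{ρ→∞} ( ∫_0^∞ log₂(1 + ρ y²) f(y) dy − log₂ ρ ) = 2 ∫_0^∞ log₂(y) f(y) dy, where the right-hand integral is finite. -/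
open Real MeasureTheory Set Filter Topology

/-!
Since the density integrates to `1`, `C(ρ) - log₂ ρ = ∫ log₂ (ρ⁻¹ + y²) f y dy`. For `ρ ≥ 1` the
integrand is dominated by `(1 + 2 |log₂ y|) |f y|`, which is integrable because the Gamma density
has a finite logarithmic moment (near `0` use `|log y| ≤ y^(-ε) / ε`, near `∞` use `log y ≤ y`).
Dominated convergence then gives the limit `∫ log₂ (y²) f y dy = 2 ∫ log₂ y f y dy`.
-/

lemma abs_log_le_rpow_neg_div_add {y ε : ℝ} (hy : 0 < y) (hε : 0 < ε) :
    |log y| ≤ y ^ (-ε) / ε + y := by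
  rcases le_or_gt y 1 with hy1 | hy1
  · have h := log_le_rpow_div (inv_pos.mpr hy).le hε
    rw [inv_rpow hy.le, ← rpow_neg hy.le, log_inv] at h
    rw [abs_of_nonpos (log_nonpos hy.le hy1)]
    linarith
  · have h := log_le_sub_one_of_pos hy
    have : 0 ≤ y ^ (-ε) / ε := by positivity
    rw [abs_of_nonneg (log_nonneg hy1.le)]
    linarith

lemma integrableOn_rpow_mul_exp_neg_div {s b : ℝ} (hs : -1 < s) (hb : 0 < b) :
    IntegrableOn (fun y : ℝ => y ^ s * exp (-y / b)) (Ioi 0) := by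
  refine (integrableOn_rpow_mul_exp_neg_mul_rpow hs one_pos (inv_pos.mpr hb)).congr_fun
    (fun y _ => ?_) measurableSet_Ioi
  simp only [rpow_one, neg_mul, inv_mul_eq_div, neg_div]

lemma integral_rpow_mul_exp_neg_div {s b : ℝ} (hs : -1 < s) (hb : 0 < b) :
    ∫ y in Ioi (0 : ℝ), y ^ s * exp (-y / b) = b ^ (s + 1) * Gamma (s + 1) := by
  have h := integral_rpow_mul_exp_neg_mul_Ioi (by linarith : 0 < s + 1) (inv_pos.mpr hb)
  rw [add_sub_cancel_right, one_div, inv_inv] at h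
  rw [← h]
  refine setIntegral_congr_fun measurableSet_Ioi fun y _ => ?_
  simp only [inv_mul_eq_div, neg_div]

lemma integrableOn_log_mul_rpow_mul_exp_neg_div {s b : ℝ} (hs : -1 < s) (hb : 0 < b) :
    IntegrableOn (fun y : ℝ => log y * (y ^ s * exp (-y / b))) (Ioi 0) := by
  obtain ⟨ε, hε, hsε⟩ : ∃ ε : ℝ, 0 < ε ∧ -1 < s - ε := ⟨(s + 1) / 2, by linarith, by linarith⟩
  have hbound : IntegrableOn
      (fun y : ℝ => ε⁻¹ * (y ^ (s - ε) * exp (-y / b)) + y ^ (s + 1) * exp (-y / b)) (Ioi 0) :=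
    ((integrableOn_rpow_mul_exp_neg_div hsε hb).const_mul _).add
      (integrableOn_rpow_mul_exp_neg_div (by linarith) hb)
  refine hbound.mono' (by fun_prop) ((ae_restrict_iff' measurableSet_Ioi).mpr
    (.of_forall fun y (hy : 0 < y) => ?_))
  calc ‖log y * (y ^ s * exp (-y / b))‖ = |log y| * (y ^ s * exp (-y / b)) := by
        rw [norm_mul, norm_eq_abs, norm_of_nonneg (by positivity)]
    _ ≤ (y ^ (-ε) / ε + y) * (y ^ s * exp (-y / b)) := by
        gcongr; exact abs_log_le_rpow_neg_div_add hy hε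
    _ = ε⁻¹ * (y ^ (s - ε) * exp (-y / b)) + y ^ (s + 1) * exp (-y / b) := by
        rw [sub_eq_neg_add, add_comm s 1, rpow_add hy, rpow_add hy, rpow_one]
        ring

lemma abs_logb_add_sq_le {ε y : ℝ} (hε : 0 < ε) (hε1 : ε ≤ 1) (hy : y ≠ 0) :
    |logb 2 (ε + y ^ 2)| ≤ 1 + 2 * |logb 2 y| := by
  have hy2 : 0 < y ^ 2 := by positivity
  have hlogb_sq : logb 2 (y ^ 2) = 2 * logb 2 y := by rw [logb_pow]; norm_num
  rw [abs_le]
  constructor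
  · have h : logb 2 (y ^ 2) ≤ logb 2 (ε + y ^ 2) := logb_le_logb_of_le one_lt_two hy2 (by linarith)
    have := neg_abs_le (logb 2 y)
    linarith
  · have h : logb 2 (ε + y ^ 2) ≤ logb 2 (1 + y ^ 2) :=
      logb_le_logb_of_le one_lt_two (by positivity) (by linarith)
    rcases le_or_gt (y ^ 2) 1 with hy1 | hy1
    · have : logb 2 (1 + y ^ 2) ≤ logb 2 2 :=
        logb_le_logb_of_le one_lt_two (by positivity) (by linarith)
      rw [logb_self_eq_one one_lt_two] at this
      have := abs_nonneg (logb 2 y)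
      linarith
    · have : logb 2 (1 + y ^ 2) ≤ logb 2 (2 * y ^ 2) :=
        logb_le_logb_of_le one_lt_two (by positivity) (by linarith)
      rw [logb_mul two_ne_zero hy2.ne', logb_self_eq_one one_lt_two, hlogb_sq] at this
      have := le_abs_self (logb 2 y)
      linarith

lemma logb_one_add_mul_sq {ρ : ℝ} (hρ : 0 < ρ) (y : ℝ) :
    logb 2 (1 + ρ * y ^ 2) = logb 2 (ρ⁻¹ + y ^ 2) + logb 2 ρ := by
  rw [← logb_mul (by positivity) hρ.ne', add_mul, inv_mul_cancel₀ hρ.ne', mul_comm]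

lemma norm_logb_inv_add_sq_mul_le {ρ y : ℝ} (hρ : 1 ≤ ρ) (hy : y ≠ 0) (x : ℝ) :
    ‖logb 2 (ρ⁻¹ + y ^ 2) * x‖ ≤ ‖x‖ + 2 * ‖logb 2 y * x‖ := by
  calc ‖logb 2 (ρ⁻¹ + y ^ 2) * x‖ ≤ (1 + 2 * |logb 2 y|) * ‖x‖ := by
        rw [norm_mul, norm_eq_abs]
        gcongr
        exact abs_logb_add_sq_le (by positivity) (inv_le_one_of_one_le₀ hρ) hy
    _ = ‖x‖ + 2 * ‖logb 2 y * x‖ := by rw [norm_mul, norm_eq_abs (logb 2 y)]; ring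

section

variable {μ : Measure ℝ} {f : ℝ → ℝ}

lemma integrable_logb_inv_add_sq_mul (hf : Integrable f μ)
    (hlogf : Integrable (fun y => logb 2 y * f y) μ) (hy : ∀ᵐ y ∂μ, y ≠ 0) {ρ : ℝ} (hρ : 1 ≤ ρ) :
    Integrable (fun y => logb 2 (ρ⁻¹ + y ^ 2) * f y) μ := by
  have hmeas : Measurable fun y : ℝ => logb 2 (ρ⁻¹ + y ^ 2) :=
    (measurable_log.comp (by fun_prop)).div_const _
  refine (hf.norm.add (hlogf.norm.const_mul 2)).mono'
    (hmeas.aestronglyMeasurable.mul hf.aestronglyMeasurable) ?_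
  filter_upwards [hy] with y hy
  exact norm_logb_inv_add_sq_mul_le hρ hy (f y)

lemma tendsto_integral_logb_inv_add_sq_mul (hf : Integrable f μ)
    (hlogf : Integrable (fun y => logb 2 y * f y) μ) (hy : ∀ᵐ y ∂μ, y ≠ 0) :
    Tendsto (fun ρ : ℝ => ∫ y, logb 2 (ρ⁻¹ + y ^ 2) * f y ∂μ) atTop
      (𝓝 (∫ y, 2 * logb 2 y * f y ∂μ)) := by
  refine tendsto_integral_filter_of_dominated_convergence (fun y => ‖f y‖ + 2 * ‖logb 2 y * f y‖)
    ((eventually_ge_atTop 1).mono fun ρ hρ =>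
      (integrable_logb_inv_add_sq_mul hf hlogf hy hρ).aestronglyMeasurable)
    ?_ (hf.norm.add (hlogf.norm.const_mul 2)) ?_
  · filter_upwards [eventually_ge_atTop 1] with ρ hρ
    filter_upwards [hy] with y hy
    exact norm_logb_inv_add_sq_mul_le hρ hy (f y)
  · filter_upwards [hy] with y hy
    have hlim : Tendsto (fun ρ : ℝ => ρ⁻¹ + y ^ 2) atTop (𝓝 (y ^ 2)) := by
      simpa using tendsto_inv_atTop_zero.add_const (y ^ 2)
    have := (hlim.logb (b := 2) (pow_ne_zero 2 hy)).mul_const (f y)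
    rwa [logb_pow, Nat.cast_ofNat] at this

theorem tendsto_integral_logb_one_add_mul_sq_sub_logb (hf : Integrable f μ)
    (hf_one : ∫ y, f y ∂μ = 1) (hlogf : Integrable (fun y => logb 2 y * f y) μ)
    (hy : ∀ᵐ y ∂μ, y ≠ 0) :
    Tendsto (fun ρ : ℝ => (∫ y, logb 2 (1 + ρ * y ^ 2) * f y ∂μ) - logb 2 ρ) atTop
      (𝓝 (2 * ∫ y, logb 2 y * f y ∂μ)) := by
  have hshift : ∀ᶠ ρ : ℝ in atTop, ∫ y, logb 2 (ρ⁻¹ + y ^ 2) * f y ∂μ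
      = (∫ y, logb 2 (1 + ρ * y ^ 2) * f y ∂μ) - logb 2 ρ := by
    filter_upwards [eventually_ge_atTop 1] with ρ hρ
    simp only [logb_one_add_mul_sq (zero_lt_one.trans_le hρ), add_mul]
    rw [integral_add (integrable_logb_inv_add_sq_mul hf hlogf hy hρ) (hf.const_mul _),
      integral_const_mul, hf_one, mul_one, add_sub_cancel_right]
  have := tendsto_integral_logb_inv_add_sq_mul hf hlogf hy
  simp only [mul_assoc, integral_const_mul] at this
  exact this.congr' hshift

end

/-- High-SNR approximation of the ergodic capacity: for the Gamma-type density
`f y = y^a e^(-y/b) / (b^(a+1) Γ(a+1))` on `(0, ∞)` with `a > -1` and `b > 0`,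
`∫ y in (0,∞), log₂ (1 + ρ y²) f y dy - log₂ ρ` converges, as `ρ → ∞`, to the finite
constant `2 ∫ y in (0,∞), log₂ y * f y dy`. -/
theorem ergodic_capacity_high_snr (a b : ℝ) (ha : -1 < a) (hb : 0 < b)
    (f : ℝ → ℝ)
    (hf : ∀ y : ℝ, f y = y ^ a * Real.exp (-y / b) / (b ^ (a + 1) * Real.Gamma (a + 1))) :
    IntegrableOn (fun y : ℝ => Real.logb 2 y * f y) (Ioi 0) ∧
      Tendsto
        (fun ρ : ℝ =>
          (∫ y in Ioi (0 : ℝ), Real.logb 2 (1 + ρ * y ^ 2) * f y) - Real.logb 2 ρ)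
        atTop (𝓝 (2 * ∫ y in Ioi (0 : ℝ), Real.logb 2 y * f y)) := by
  obtain rfl : f = fun y => y ^ a * exp (-y / b) / (b ^ (a + 1) * Gamma (a + 1)) := funext hf
  have hnorm : b ^ (a + 1) * Gamma (a + 1) ≠ 0 :=
    (mul_pos (rpow_pos_of_pos hb _) (Gamma_pos_of_pos (by linarith))).ne'
  have hlogf : IntegrableOn (fun y => logb 2 y * (y ^ a * exp (-y / b) /
      (b ^ (a + 1) * Gamma (a + 1)))) (Ioi 0) := by
    refine IntegrableOn.congr_fun ((integrableOn_log_mul_rpow_mul_exp_neg_div ha hb).div_const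
      (log 2 * (b ^ (a + 1) * Gamma (a + 1)))) (fun y _ => ?_) measurableSet_Ioi
    rw [logb]
    ring
  refine ⟨hlogf, tendsto_integral_logb_one_add_mul_sq_sub_logb
    ((integrableOn_rpow_mul_exp_neg_div ha hb).div_const _) ?_ hlogf
    (ae_restrict_of_forall_mem measurableSet_Ioi fun y hy => (mem_Ioi.mp hy).ne')⟩
  rw [integral_div, integral_rpow_mul_exp_neg_div ha hb, div_self hnorm]
end

section
/- Let a > −1 and b > 0. The logarithmic moment of the Gamma-type density f(y) = y^a e^{−y/b}/(b^{a+1} Γ(a+1)) satisfies ∫_0^∞ (ln y) f(y) dy = ln b + Γ′(a+1)/Γ(a+1). Consequently, the high-SNR limit of the ergodic capacity satisfies lim_{ρ→∞} ( ∫_0^∞ log₂(1 + ρ y²) f(y) dy − log₂(b² ρ) ) = (2/ln 2) · Γ′(a+1)/Γ(a+1). -/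
/-!
Substituting `y = b t` turns integrals against the density into Euler-type integrals
`∫ g (b t) t^a e^{-t} dt / Γ(a+1)`. This gives total mass `1` and log-moment
`log b + Γ'(a+1)/Γ(a+1)`, where `Γ'(s) = ∫ log t · t^(s-1) e^{-t} dt` comes from differentiating the
Euler integral under the integral sign (the Mellin transform of `e^{-t}`).

For the capacity, `log (1 + ρ y²) = log ρ + 2 log y + log (1 + (ρ y²)⁻¹)`. The last term tends to `0`
pointwise as `ρ → ∞` and is bounded for `ρ ≥ 1` by `log 2 + 2 |log y|`, which is integrable against
the density, so dominated convergence removes it in the limit.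
-/

open Real MeasureTheory Set Filter Topology

lemma ofReal_log_mul_rpow_mul_exp_neg (s : ℝ) {t : ℝ} (ht : 0 < t) :
    (((log t * (t ^ (s - 1) * exp (-t)) : ℝ)) : ℂ) =
      (t : ℂ) ^ ((s : ℂ) - 1) * (log t * exp (-t)) := by
  rw [← Complex.ofReal_one, ← Complex.ofReal_sub, ← Complex.ofReal_cpow ht.le]
  push_cast
  ring

lemma integrableOn_log_mul_rpow_mul_exp_neg {s : ℝ} (hs : 0 < s) :
    IntegrableOn (fun t ↦ log t * (t ^ (s - 1) * exp (-t))) (Ioi 0) := by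
  have hexp : Continuous fun t : ℝ ↦ ((exp (-t) : ℝ) : ℂ) := by fun_prop
  have hmellin := (mellin_hasDerivAt_of_isBigO_rpow (s := s) (a := s + 1) (b := 0)
    (hexp.continuousOn.locallyIntegrableOn measurableSet_Ioi) ?_ (by simp) ?_
    (by simpa using hs)).1
  · refine IntegrableOn.congr_fun hmellin.re (fun t ht ↦ ?_) measurableSet_Ioi
    simp only [smul_eq_mul, Complex.real_smul]
    rw [← ofReal_log_mul_rpow_mul_exp_neg s ht, RCLike.re_to_complex, Complex.ofReal_re]
  · rw [← Asymptotics.isBigO_norm_left]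
    simp_rw [Complex.norm_real, Asymptotics.isBigO_norm_left]
    simpa only [neg_one_mul] using (isLittleO_exp_neg_mul_rpow_atTop zero_lt_one _).isBigO
  · simpa using ((hexp.tendsto 0).mono_left nhdsWithin_le_nhds).isBigO_one ℝ

lemma hasDerivAt_Gamma_of_pos {s : ℝ} (hs : 0 < s) :
    HasDerivAt Gamma (∫ t in Ioi 0, log t * (t ^ (s - 1) * exp (-t))) s := by
  have hs' : 0 < (s : ℂ).re := by simpa using hs
  have hderiv := (Complex.hasDerivAt_GammaIntegral hs').congr_of_eventuallyEq
    (((Complex.continuous_re.isOpen_preimage _ isOpen_Ioi).eventually_mem hs').mono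
      fun z hz ↦ Complex.Gamma_eq_integral hz)
  rw [← setIntegral_congr_fun measurableSet_Ioi fun t ht ↦
    ofReal_log_mul_rpow_mul_exp_neg s ht, integral_complex_ofReal] at hderiv
  exact hderiv.real_of_complex

noncomputable def gammaTypeDensity (a b y : ℝ) : ℝ :=
  y ^ a * exp (-y / b) / (b ^ (a + 1) * Gamma (a + 1))

section gammaTypeDensity

variable {a b : ℝ}

lemma mul_gammaTypeDensity_mul_left (hb : 0 < b) {t : ℝ} (ht : 0 ≤ t) :
    b * gammaTypeDensity a b (b * t) = t ^ a * exp (-t) / Gamma (a + 1) := by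
  rw [gammaTypeDensity, mul_rpow hb.le ht, rpow_add_one hb.ne', neg_div,
    mul_div_cancel_left₀ _ hb.ne']
  field_simp

lemma integral_mul_gammaTypeDensity (hb : 0 < b) (g : ℝ → ℝ) :
    ∫ y in Ioi 0, g y * gammaTypeDensity a b y =
      (∫ t in Ioi 0, g (b * t) * (t ^ a * exp (-t))) / Gamma (a + 1) := by
  have hsub := integral_comp_mul_left_Ioi' (fun y ↦ g y * gammaTypeDensity a b y) 0 hb
  rw [mul_zero] at hsub
  rw [← hsub, smul_eq_mul, ← integral_const_mul, ← integral_div]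
  refine setIntegral_congr_fun measurableSet_Ioi fun t ht ↦ ?_
  rw [mul_left_comm, mul_gammaTypeDensity_mul_left hb (le_of_lt ht)]
  ring

lemma integrableOn_mul_gammaTypeDensity (hb : 0 < b) {g : ℝ → ℝ}
    (hg : IntegrableOn (fun t ↦ g (b * t) * (t ^ a * exp (-t))) (Ioi 0)) :
    IntegrableOn (fun y ↦ g y * gammaTypeDensity a b y) (Ioi 0) := by
  rw [← mul_zero b, ← integrableOn_Ioi_comp_mul_left_iff _ 0 hb]
  refine IntegrableOn.congr_fun ((hg.div_const (Gamma (a + 1))).div_const b) (fun t ht ↦ ?_)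
    measurableSet_Ioi
  rw [div_eq_iff hb.ne', mul_assoc, mul_comm _ b, mul_gammaTypeDensity_mul_left hb (le_of_lt ht)]
  ring

lemma integrableOn_rpow_mul_exp_neg (ha : -1 < a) :
    IntegrableOn (fun t ↦ t ^ a * exp (-t)) (Ioi 0) := by
  simpa [mul_comm] using GammaIntegral_convergent (s := a + 1) (by linarith)

lemma integral_rpow_mul_exp_neg (ha : -1 < a) :
    ∫ t in Ioi 0, t ^ a * exp (-t) = Gamma (a + 1) := by
  simp [Gamma_eq_integral (s := a + 1) (by linarith), mul_comm]

lemma integrableOn_gammaTypeDensity (ha : -1 < a) (hb : 0 < b) :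
    IntegrableOn (gammaTypeDensity a b) (Ioi 0) := by
  simpa using integrableOn_mul_gammaTypeDensity hb (g := fun _ ↦ 1)
    (by simpa using integrableOn_rpow_mul_exp_neg ha)

lemma integral_gammaTypeDensity (ha : -1 < a) (hb : 0 < b) :
    ∫ y in Ioi 0, gammaTypeDensity a b y = 1 := by
  have hΓ : Gamma (a + 1) ≠ 0 := (Gamma_pos_of_pos (by linarith)).ne'
  simpa [integral_rpow_mul_exp_neg ha, hΓ] using
    integral_mul_gammaTypeDensity hb (a := a) (fun _ ↦ 1)

lemma integrableOn_log_mul_gammaTypeDensity (ha : -1 < a) (hb : 0 < b) :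
    IntegrableOn (fun y ↦ log y * gammaTypeDensity a b y) (Ioi 0) := by
  refine integrableOn_mul_gammaTypeDensity hb ?_
  have hlog := integrableOn_log_mul_rpow_mul_exp_neg (s := a + 1) (by linarith)
  rw [add_sub_cancel_right] at hlog
  refine IntegrableOn.congr_fun (((integrableOn_rpow_mul_exp_neg ha).const_mul (log b)).add hlog)
    (fun t ht ↦ ?_) measurableSet_Ioi
  rw [Pi.add_apply, log_mul hb.ne' (ne_of_gt ht)]
  ring

lemma integral_log_mul_gammaTypeDensity (ha : -1 < a) (hb : 0 < b) :
    ∫ y in Ioi 0, log y * gammaTypeDensity a b y =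
      log b + deriv Gamma (a + 1) / Gamma (a + 1) := by
  have hs : 0 < a + 1 := by linarith
  have hlog := integrableOn_log_mul_rpow_mul_exp_neg hs
  rw [add_sub_cancel_right] at hlog
  have hΓ : Gamma (a + 1) ≠ 0 := (Gamma_pos_of_pos hs).ne'
  rw [integral_mul_gammaTypeDensity hb, (hasDerivAt_Gamma_of_pos hs).deriv, add_sub_cancel_right,
    setIntegral_congr_fun measurableSet_Ioi fun t ht ↦ by rw [log_mul hb.ne' (ne_of_gt ht), add_mul],
    integral_add ((integrableOn_rpow_mul_exp_neg ha).const_mul _) hlog, integral_const_mul,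
    integral_rpow_mul_exp_neg ha]
  field_simp

end gammaTypeDensity

lemma log_one_add_inv_sq_le (y : ℝ) : log (1 + (y ^ 2)⁻¹) ≤ log 2 + 2 * |log y| := by
  rcases eq_or_ne y 0 with rfl | hy
  · simp [(log_pos one_lt_two).le]
  have hy2 : 0 < y ^ 2 := by positivity
  rcases le_total 1 (y ^ 2) with h | h
  · calc log (1 + (y ^ 2)⁻¹) ≤ log 2 :=
          log_le_log (by positivity) (by linarith [inv_le_one_of_one_le₀ h])
      _ ≤ log 2 + 2 * |log y| := by linarith [abs_nonneg (log y)]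
  · calc log (1 + (y ^ 2)⁻¹) ≤ log (2 * (y ^ 2)⁻¹) :=
          log_le_log (by positivity) (by linarith [one_le_inv₀ hy2 |>.mpr h])
      _ = log 2 - 2 * log y := by
          rw [log_mul two_ne_zero (by positivity), log_inv, log_pow]; push_cast; ring
      _ ≤ log 2 + 2 * |log y| := by linarith [neg_abs_le (log y)]

lemma abs_log_one_add_inv_mul_sq_le {ρ : ℝ} (hρ : 1 ≤ ρ) (y : ℝ) :
    |log (1 + (ρ * y ^ 2)⁻¹)| ≤ log 2 + 2 * |log y| := by
  have hinv : 0 ≤ (ρ * y ^ 2)⁻¹ := by positivity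
  rw [abs_of_nonneg (log_nonneg (by linarith))]
  refine le_trans ?_ (log_one_add_inv_sq_le y)
  rcases eq_or_ne y 0 with rfl | hy
  · simp
  gcongr
  exact le_mul_of_one_le_left (by positivity) hρ

lemma log_one_add_mul_sq {ρ y : ℝ} (hρ : 0 < ρ) (hy : y ≠ 0) :
    log (1 + ρ * y ^ 2) = log ρ + 2 * log y + log (1 + (ρ * y ^ 2)⁻¹) := by
  have hρy : 0 < ρ * y ^ 2 := by positivity
  rw [show 1 + ρ * y ^ 2 = ρ * y ^ 2 * (1 + (ρ * y ^ 2)⁻¹) by field_simp; ring,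
    log_mul hρy.ne' (by positivity), log_mul hρ.ne' (by positivity), log_pow]
  push_cast
  ring

section HighSNR

variable {μ : Measure ℝ} {f : ℝ → ℝ}

lemma norm_log_one_add_inv_mul_sq_mul_le {ρ : ℝ} (hρ : 1 ≤ ρ) (y : ℝ) :
    ‖log (1 + (ρ * y ^ 2)⁻¹) * f y‖ ≤ log 2 * ‖f y‖ + 2 * ‖log y * f y‖ := by
  simp only [norm_mul, norm_eq_abs]
  nlinarith [abs_log_one_add_inv_mul_sq_le hρ y, abs_nonneg (f y)]

lemma integrable_log_one_add_inv_mul_sq_mul (hf : Integrable f μ)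
    (hlog : Integrable (fun y ↦ log y * f y) μ) {ρ : ℝ} (hρ : 1 ≤ ρ) :
    Integrable (fun y ↦ log (1 + (ρ * y ^ 2)⁻¹) * f y) μ :=
  ((hf.norm.const_mul _).add (hlog.norm.const_mul _)).mono'
    ((Measurable.aestronglyMeasurable (by fun_prop)).mul hf.1)
    (ae_of_all _ (norm_log_one_add_inv_mul_sq_mul_le hρ))

lemma tendsto_integral_log_one_add_inv_mul_sq_mul (hf : Integrable f μ)
    (hlog : Integrable (fun y ↦ log y * f y) μ) :
    Tendsto (fun ρ ↦ ∫ y, log (1 + (ρ * y ^ 2)⁻¹) * f y ∂μ) atTop (𝓝 0) := by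
  have hlim (y : ℝ) : Tendsto (fun ρ ↦ log (1 + (ρ * y ^ 2)⁻¹) * f y) atTop (𝓝 0) := by
    rcases eq_or_ne y 0 with rfl | hy
    · simp
    have hinv : Tendsto (fun ρ ↦ 1 + (ρ * y ^ 2)⁻¹) atTop (𝓝 1) := by
      simpa using ((tendsto_id.atTop_mul_const (by positivity : (0 : ℝ) < y ^ 2)
        ).inv_tendsto_atTop).const_add 1
    simpa using (((continuousAt_log one_ne_zero).tendsto).comp hinv).mul_const (f y)
  simpa using tendsto_integral_filter_of_dominated_convergence _
    ((eventually_ge_atTop 1).mono fun ρ hρ ↦ (integrable_log_one_add_inv_mul_sq_mul hf hlog hρ).1)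
    ((eventually_ge_atTop 1).mono fun ρ hρ ↦ ae_of_all _ (norm_log_one_add_inv_mul_sq_mul_le hρ))
    ((hf.norm.const_mul _).add (hlog.norm.const_mul _)) (ae_of_all _ hlim)

theorem tendsto_integral_log_one_add_mul_sq_mul_sub (hf : Integrable f μ)
    (hlog : Integrable (fun y ↦ log y * f y) μ) (h0 : ∀ᵐ y ∂μ, y ≠ 0) :
    Tendsto (fun ρ ↦ ∫ y, log (1 + ρ * y ^ 2) * f y ∂μ - log ρ * ∫ y, f y ∂μ) atTop
      (𝓝 (2 * ∫ y, log y * f y ∂μ)) := by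
  have hlim := (tendsto_integral_log_one_add_inv_mul_sq_mul hf hlog).const_add
    (2 * ∫ y, log y * f y ∂μ)
  rw [add_zero] at hlim
  refine hlim.congr' ?_
  filter_upwards [eventually_ge_atTop 1] with ρ hρ
  have hsplit : ∫ y, log (1 + ρ * y ^ 2) * f y ∂μ =
      ∫ y, (log ρ * f y + 2 * (log y * f y) + log (1 + (ρ * y ^ 2)⁻¹) * f y) ∂μ := by
    refine integral_congr_ae (h0.mono fun y hy ↦ ?_)
    dsimp only
    rw [log_one_add_mul_sq (by linarith) hy]
    ring
  have hρf : Integrable (fun y ↦ log ρ * f y) μ := hf.const_mul _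
  have hlog2 : Integrable (fun y ↦ 2 * (log y * f y)) μ := hlog.const_mul _
  rw [hsplit, integral_add (f := fun y ↦ log ρ * f y + 2 * (log y * f y)) (hρf.add hlog2)
    (integrable_log_one_add_inv_mul_sq_mul hf hlog hρ), integral_add hρf hlog2,
    integral_const_mul, integral_const_mul]
  ring

end HighSNR

/-- Let `a > -1` and `b > 0`. The logarithmic moment of the Gamma-type density
`f y = y^a e^(-y/b) / (b^(a+1) Γ(a+1))` satisfies
`∫ y in (0,∞), ln y * f y dy = ln b + Γ′(a+1)/Γ(a+1)`; consequently, the high-SNR limit of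
the ergodic capacity satisfies
`lim_{ρ→∞} (∫ y in (0,∞), log₂ (1 + ρ y²) f y dy - log₂ (b² ρ)) = (2/ln 2) Γ′(a+1)/Γ(a+1)`. -/
theorem ergodic_capacity_high_snr_digamma (a b : ℝ) (ha : -1 < a) (hb : 0 < b)
    (f : ℝ → ℝ)
    (hf : ∀ y : ℝ, f y = y ^ a * Real.exp (-y / b) / (b ^ (a + 1) * Real.Gamma (a + 1))) :
    (∫ y in Ioi (0 : ℝ), Real.log y * f y) =
        Real.log b + deriv Real.Gamma (a + 1) / Real.Gamma (a + 1) ∧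
      Tendsto
        (fun ρ : ℝ =>
          (∫ y in Ioi (0 : ℝ), Real.logb 2 (1 + ρ * y ^ 2) * f y) -
            Real.logb 2 (b ^ 2 * ρ))
        atTop
        (𝓝 (2 / Real.log 2 * (deriv Real.Gamma (a + 1) / Real.Gamma (a + 1)))) := by
  obtain rfl : f = gammaTypeDensity a b := funext hf
  have hlogMoment := integral_log_mul_gammaTypeDensity ha hb
  refine ⟨hlogMoment, ?_⟩
  have hsnr := tendsto_integral_log_one_add_mul_sq_mul_sub (integrableOn_gammaTypeDensity ha hb)
    (integrableOn_log_mul_gammaTypeDensity ha hb)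
    ((ae_restrict_mem measurableSet_Ioi).mono fun y hy ↦ ne_of_gt hy)
  rw [integral_gammaTypeDensity ha hb, hlogMoment] at hsnr
  rw [show 2 / log 2 * (deriv Gamma (a + 1) / Gamma (a + 1)) =
    (2 * (log b + deriv Gamma (a + 1) / Gamma (a + 1)) - 2 * log b) / log 2 by ring]
  refine ((hsnr.sub_const _).div_const _).congr' ?_
  filter_upwards [eventually_gt_atTop 0] with ρ hρ
  simp only [logb, div_mul_eq_mul_div, integral_div]
  rw [log_mul (by positivity) hρ.ne', log_pow]
  push_cast
  ring
end

section
/- Fix ρ > 0. For each integer N ≥ 1, let k₁(N) = Nπ/2, k₂(N) = 4N(1 − π²/16), a(N) = k₁(N)²/k₂(N) − 1, b = k₂(N)/k₁(N) (which is independent of N), and define the ergodic capacity C(N) = ∫_0^∞ log₂(1 + ρ y²) · y^{a(N)} e^{−y/b}/(b^{a(N)+1} Γ(a(N)+1)) dy. Then lim_{N→∞} ( C(2N) − C(N) ) = 2; that is, asymptotically, doubling the number of reflection units increases the ergodic capacity by 2 bits/s/Hz. -/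
open Real MeasureTheory Set Filter Topology

/-! With `α = a + 1 = c N`, `c = π² / (16 - π²)`, the channel density is the Gamma density of
shape `α` and scale `b`. The shift identity `y f_α(y) = b α f_{α+1}(y)` gives the moments
`E Y = b α`, `E Y⁻¹ = 1 / (b (α - 1))` and `E Y⁻² = 1 / (b² (α - 1) (α - 2))`.
Since `log(1 + ρ y²)` lies between `log ρ + 2 log y` and `log ρ + 2 log y + 1 / (ρ y²)`, and the
tangent lines of `log` at `b (α - 1)` and at `b α` bound `E log Y` by these moments,
`log ρ + 2 log (b (α - 1)) ≤ E log (1 + ρ Y²) ≤ log ρ + 2 log (b α) + 1 / (ρ b² (α - 1) (α - 2))`.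
Hence the capacity is `log ρ + 2 log (b α) + o(1)` nats, and doubling `α` adds `2 log 2` nats,
i.e. 2 bits. -/

noncomputable def gammaDensity (α B y : ℝ) : ℝ :=
  y ^ (α - 1) * exp (-y / B) / (B ^ α * Gamma α)

section GammaDensity

variable {α B : ℝ}

lemma gammaDensity_nonneg (hα : 0 < α) (hB : 0 < B) {y : ℝ} (hy : 0 ≤ y) :
    0 ≤ gammaDensity α B y := by
  unfold gammaDensity
  positivity

lemma integrableOn_gammaDensity (hα : 0 < α) (hB : 0 < B) :
    IntegrableOn (gammaDensity α B) (Ioi 0) := by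
  have h := integrableOn_rpow_mul_exp_neg_mul_rpow (p := 1) (show -1 < α - 1 by linarith)
    one_pos (inv_pos.2 hB)
  refine IntegrableOn.congr_fun (h.div_const (B ^ α * Gamma α)) (fun y _ => ?_) measurableSet_Ioi
  simp only [gammaDensity, rpow_one, neg_mul, inv_mul_eq_div, neg_div]

lemma integral_gammaDensity (hα : 0 < α) (hB : 0 < B) :
    ∫ y in Ioi 0, gammaDensity α B y = 1 := by
  have h := integral_rpow_mul_exp_neg_mul_Ioi hα (inv_pos.2 hB)
  simp only [inv_mul_eq_div, one_div, inv_inv] at h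
  simp only [gammaDensity, integral_div, neg_div, h]
  field_simp

lemma mul_gammaDensity (hα : 0 < α) (hB : 0 < B) {y : ℝ} (hy : 0 < y) :
    y * gammaDensity α B y = B * α * gammaDensity (α + 1) B y := by
  simp only [gammaDensity, Gamma_add_one hα.ne', rpow_add hB, rpow_one, add_sub_cancel_right,
    rpow_sub_one hy.ne']
  field_simp

lemma inv_mul_gammaDensity (hα : 1 < α) (hB : 0 < B) {y : ℝ} (hy : 0 < y) :
    y⁻¹ * gammaDensity α B y = (B * (α - 1))⁻¹ * gammaDensity (α - 1) B y := by
  have h := mul_gammaDensity (α := α - 1) (by linarith) hB hy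
  rw [sub_add_cancel] at h
  rw [inv_mul_eq_iff_eq_mul₀ hy.ne', mul_left_comm, h,
    inv_mul_cancel_left₀ (mul_pos hB (sub_pos.2 hα)).ne']

lemma integrableOn_mul_gammaDensity (hα : 0 < α) (hB : 0 < B) :
    IntegrableOn (fun y => y * gammaDensity α B y) (Ioi 0) :=
  IntegrableOn.congr_fun ((integrableOn_gammaDensity (by linarith) hB).const_mul (B * α))
    (fun _ hy => (mul_gammaDensity hα hB hy).symm) measurableSet_Ioi

lemma integral_mul_gammaDensity (hα : 0 < α) (hB : 0 < B) :
    ∫ y in Ioi 0, y * gammaDensity α B y = B * α := by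
  rw [setIntegral_congr_fun measurableSet_Ioi (fun _ hy => mul_gammaDensity hα hB hy),
    integral_const_mul, integral_gammaDensity (by linarith) hB, mul_one]

lemma integrableOn_inv_mul_gammaDensity (hα : 1 < α) (hB : 0 < B) :
    IntegrableOn (fun y => y⁻¹ * gammaDensity α B y) (Ioi 0) :=
  IntegrableOn.congr_fun ((integrableOn_gammaDensity (by linarith) hB).const_mul _)
    (fun _ hy => (inv_mul_gammaDensity hα hB hy).symm) measurableSet_Ioi

lemma integral_inv_mul_gammaDensity (hα : 1 < α) (hB : 0 < B) :
    ∫ y in Ioi 0, y⁻¹ * gammaDensity α B y = (B * (α - 1))⁻¹ := by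
  rw [setIntegral_congr_fun measurableSet_Ioi (fun _ hy => inv_mul_gammaDensity hα hB hy),
    integral_const_mul, integral_gammaDensity (by linarith) hB, mul_one]

lemma inv_sq_mul_gammaDensity (hα : 2 < α) (hB : 0 < B) {y : ℝ} (hy : 0 < y) :
    (y ^ 2)⁻¹ * gammaDensity α B y =
      (B * (α - 1))⁻¹ * (y⁻¹ * gammaDensity (α - 1) B y) := by
  rw [← inv_pow, sq, mul_assoc, inv_mul_gammaDensity (by linarith) hB hy, mul_left_comm]

lemma integrableOn_inv_sq_mul_gammaDensity (hα : 2 < α) (hB : 0 < B) :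
    IntegrableOn (fun y => (y ^ 2)⁻¹ * gammaDensity α B y) (Ioi 0) :=
  IntegrableOn.congr_fun
    ((integrableOn_inv_mul_gammaDensity (α := α - 1) (by linarith) hB).const_mul _)
    (fun _ hy => (inv_sq_mul_gammaDensity hα hB hy).symm) measurableSet_Ioi

lemma integral_inv_sq_mul_gammaDensity (hα : 2 < α) (hB : 0 < B) :
    ∫ y in Ioi 0, (y ^ 2)⁻¹ * gammaDensity α B y = (B ^ 2 * ((α - 1) * (α - 2)))⁻¹ := by
  rw [setIntegral_congr_fun measurableSet_Ioi (fun _ hy => inv_sq_mul_gammaDensity hα hB hy),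
    integral_const_mul, integral_inv_mul_gammaDensity (by linarith) hB, ← mul_inv]
  ring

end GammaDensity

lemma log_le_log_add_div_sub_one {y m : ℝ} (hy : 0 < y) (hm : 0 < m) :
    log y ≤ log m + y / m - 1 := by
  have h := log_le_sub_one_of_pos (div_pos hy hm)
  rw [log_div hy.ne' hm.ne'] at h
  linarith

lemma log_add_two_mul_log_le_log_one_add_mul_sq {ρ y : ℝ} (hρ : 0 < ρ) (hy : 0 < y) :
    log ρ + 2 * log y ≤ log (1 + ρ * y ^ 2) := by
  calc log ρ + 2 * log y = log (ρ * y ^ 2) := by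
        rw [log_mul hρ.ne' (by positivity), log_pow, Nat.cast_ofNat]
    _ ≤ log (1 + ρ * y ^ 2) := log_le_log (by positivity) (by linarith)

lemma log_one_add_mul_sq_le {ρ y : ℝ} (hρ : 0 < ρ) (hy : 0 < y) :
    log (1 + ρ * y ^ 2) ≤ log ρ + 2 * log y + (ρ * y ^ 2)⁻¹ := by
  have hx : 0 < ρ * y ^ 2 := by positivity
  have h := log_le_sub_one_of_pos (show 0 < 1 + (ρ * y ^ 2)⁻¹ by positivity)
  have hsplit : 1 + ρ * y ^ 2 = ρ * y ^ 2 * (1 + (ρ * y ^ 2)⁻¹) := by field_simp; ring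
  rw [hsplit, log_mul hx.ne' (by positivity), log_mul hρ.ne' (by positivity), log_pow]
  push_cast
  linarith

noncomputable def gammaCapacity (ρ α B : ℝ) : ℝ :=
  ∫ y in Ioi 0, log (1 + ρ * y ^ 2) * gammaDensity α B y

section GammaCapacity

variable {ρ α B : ℝ}

lemma integrableOn_log_one_add_mul_sq_mul_gammaDensity (hρ : 0 < ρ) (hα : 0 < α) (hB : 0 < B) :
    IntegrableOn (fun y => log (1 + ρ * y ^ 2) * gammaDensity α B y) (Ioi 0) := by
  have hsq : IntegrableOn (fun y => ρ * (B * α) * (y * gammaDensity (α + 1) B y)) (Ioi 0) :=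
    (integrableOn_mul_gammaDensity (by linarith) hB).const_mul _
  refine Integrable.mono' hsq ?_ ((ae_restrict_iff' measurableSet_Ioi).2 (ae_of_all _ ?_))
  · exact ((by fun_prop : Measurable fun y : ℝ => log (1 + ρ * y ^ 2)).aestronglyMeasurable).mul
      (integrableOn_gammaDensity hα hB).aestronglyMeasurable
  · intro y hy
    have hy : 0 < y := hy
    have hlog : 0 ≤ log (1 + ρ * y ^ 2) := log_nonneg (by nlinarith [sq_nonneg y])
    have hle : log (1 + ρ * y ^ 2) ≤ ρ * y ^ 2 := by
      linarith [log_le_sub_one_of_pos (show 0 < 1 + ρ * y ^ 2 by positivity)]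
    rw [norm_mul, Real.norm_of_nonneg hlog, Real.norm_of_nonneg (gammaDensity_nonneg hα hB hy.le)]
    calc log (1 + ρ * y ^ 2) * gammaDensity α B y ≤ ρ * y ^ 2 * gammaDensity α B y :=
          mul_le_mul_of_nonneg_right hle (gammaDensity_nonneg hα hB hy.le)
      _ = ρ * (y * (y * gammaDensity α B y)) := by ring
      _ = ρ * (B * α) * (y * gammaDensity (α + 1) B y) := by
          rw [mul_gammaDensity hα hB hy]
          ring

lemma log_add_two_mul_log_le_gammaCapacity (hρ : 0 < ρ) (hα : 1 < α) (hB : 0 < B) :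
    log ρ + 2 * log (B * (α - 1)) ≤ gammaCapacity ρ α B := by
  set m := B * (α - 1) with hm_def
  have hm : 0 < m := mul_pos hB (sub_pos.2 hα)
  have hα0 : 0 < α := by linarith
  have hpoint : ∀ y ∈ Ioi (0 : ℝ), (log ρ + 2 * log m + 2) * gammaDensity α B y -
      2 * m * (y⁻¹ * gammaDensity α B y) ≤ log (1 + ρ * y ^ 2) * gammaDensity α B y := by
    intro y hy
    have hy : 0 < y := hy
    have h1 := log_le_log_add_div_sub_one hm hy
    have h2 := log_add_two_mul_log_le_log_one_add_mul_sq hρ hy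
    calc _ = (log ρ + 2 * (log m + 1 - m / y)) * gammaDensity α B y := by ring
      _ ≤ _ := mul_le_mul_of_nonneg_right (by linarith) (gammaDensity_nonneg hα0 hB hy.le)
  calc log ρ + 2 * log m
      = ∫ y in Ioi 0, (log ρ + 2 * log m + 2) * gammaDensity α B y -
          2 * m * (y⁻¹ * gammaDensity α B y) := by
        rw [integral_sub ((integrableOn_gammaDensity hα0 hB).const_mul _)
          ((integrableOn_inv_mul_gammaDensity hα hB).const_mul _), integral_const_mul,
          integral_const_mul, integral_gammaDensity hα0 hB, integral_inv_mul_gammaDensity hα hB,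
          ← hm_def, mul_assoc, mul_inv_cancel₀ hm.ne']
        ring
    _ ≤ gammaCapacity ρ α B :=
        setIntegral_mono_on (((integrableOn_gammaDensity hα0 hB).const_mul _).sub
          ((integrableOn_inv_mul_gammaDensity hα hB).const_mul _))
          (integrableOn_log_one_add_mul_sq_mul_gammaDensity hρ hα0 hB) measurableSet_Ioi hpoint

lemma gammaCapacity_le (hρ : 0 < ρ) (hα : 2 < α) (hB : 0 < B) :
    gammaCapacity ρ α B ≤
      log ρ + 2 * log (B * α) + (ρ * B ^ 2 * ((α - 1) * (α - 2)))⁻¹ := by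
  set m := B * α with hm_def
  have hα0 : 0 < α := by linarith
  have hm : 0 < m := mul_pos hB hα0
  have hpoint : ∀ y ∈ Ioi (0 : ℝ), log (1 + ρ * y ^ 2) * gammaDensity α B y ≤
      (log ρ + 2 * log m - 2) * gammaDensity α B y + 2 / m * (y * gammaDensity α B y) +
        ρ⁻¹ * ((y ^ 2)⁻¹ * gammaDensity α B y) := by
    intro y hy
    have hy : 0 < y := hy
    have h1 := log_le_log_add_div_sub_one hy hm
    have h2 := log_one_add_mul_sq_le hρ hy
    calc _ ≤ (log ρ + 2 * (log m + y / m - 1) + (ρ * y ^ 2)⁻¹) * gammaDensity α B y :=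
          mul_le_mul_of_nonneg_right (by linarith) (gammaDensity_nonneg hα0 hB hy.le)
      _ = _ := by rw [mul_inv]; ring
  have hint₀ := (integrableOn_gammaDensity hα0 hB).const_mul (log ρ + 2 * log m - 2)
  have hint₁ := (integrableOn_mul_gammaDensity hα0 hB).const_mul (2 / m)
  have hint₂ := (integrableOn_inv_sq_mul_gammaDensity hα hB).const_mul ρ⁻¹
  have hint₀₁ : IntegrableOn (fun y => (log ρ + 2 * log m - 2) * gammaDensity α B y +
      2 / m * (y * gammaDensity α B y)) (Ioi 0) := hint₀.add hint₁
  calc gammaCapacity ρ α B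
      ≤ ∫ y in Ioi 0, (log ρ + 2 * log m - 2) * gammaDensity α B y +
          2 / m * (y * gammaDensity α B y) + ρ⁻¹ * ((y ^ 2)⁻¹ * gammaDensity α B y) :=
        setIntegral_mono_on (integrableOn_log_one_add_mul_sq_mul_gammaDensity hρ hα0 hB)
          (hint₀₁.add hint₂) measurableSet_Ioi hpoint
    _ = _ := by
        rw [integral_add hint₀₁ hint₂, integral_add hint₀ hint₁, integral_const_mul,
          integral_const_mul, integral_const_mul, integral_gammaDensity hα0 hB,
          integral_mul_gammaDensity hα0 hB, integral_inv_sq_mul_gammaDensity hα hB,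
          ← hm_def, div_mul_cancel₀ _ hm.ne', ← mul_inv, ← mul_assoc]
        ring

end GammaCapacity

lemma tendsto_gammaCapacity_sub_log {ρ B : ℝ} (hρ : 0 < ρ) (hB : 0 < B) :
    Tendsto (fun α => gammaCapacity ρ α B - (log ρ + 2 * log (B * α))) atTop (𝓝 0) := by
  have hlower : Tendsto (fun α => 2 * (log (α + -1) - log α)) atTop (𝓝 0) := by
    simpa using (tendsto_log_comp_add_sub_log (-1)).const_mul 2
  have hupper : Tendsto (fun α => (ρ * B ^ 2 * ((α + -1) * (α + -2)))⁻¹) atTop (𝓝 0) :=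
    tendsto_inv_atTop_zero.comp <| Tendsto.const_mul_atTop (by positivity) <|
      (tendsto_atTop_add_const_right _ _ tendsto_id).atTop_mul_atTop₀
        (tendsto_atTop_add_const_right _ _ tendsto_id)
  refine tendsto_of_tendsto_of_tendsto_of_le_of_le' hlower hupper ?_ ?_ <;>
    filter_upwards [eventually_gt_atTop 2] with α hα
  · have h := log_add_two_mul_log_le_gammaCapacity hρ (by linarith : 1 < α) hB
    rw [log_mul hB.ne' (by linarith)] at h
    rw [log_mul hB.ne' (by linarith), ← sub_eq_add_neg]
    linarith
  · have h := gammaCapacity_le hρ hα hB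
    simp only [← sub_eq_add_neg]
    linarith

lemma tendsto_gammaCapacity_two_mul_sub {ρ B : ℝ} (hρ : 0 < ρ) (hB : 0 < B) :
    Tendsto (fun α => gammaCapacity ρ (2 * α) B - gammaCapacity ρ α B) atTop
      (𝓝 (2 * log 2)) := by
  have h := tendsto_gammaCapacity_sub_log hρ hB
  have h2 := ((h.comp (tendsto_id.const_mul_atTop two_pos)).sub h).add_const (2 * log 2)
  rw [sub_zero, zero_add] at h2
  refine h2.congr' ?_
  filter_upwards [eventually_gt_atTop 0] with α hα
  simp only [Function.comp_apply, id_eq]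
  rw [mul_left_comm, log_mul two_ne_zero (by positivity)]
  ring

/-- Fix a transmit SNR `ρ > 0`. For each `N ≥ 1` let `k₁ N = N π / 2`,
`k₂ N = 4 N (1 - π²/16)`, `a N = (k₁ N)² / k₂ N - 1`, and let `b = k₂ N / k₁ N` (which is
independent of `N`). With the ergodic capacity
`C N = ∫ y in (0,∞), log₂ (1 + ρ y²) * y^(a N) e^(-y/b) / (b^(a N + 1) Γ(a N + 1)) dy`,
doubling the number of reflection units asymptotically adds 2 bits/s/Hz:
`lim_{N→∞} (C (2 N) - C N) = 2`. -/
theorem ergodic_capacity_doubling_gain (ρ : ℝ) (hρ : 0 < ρ)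
    (k₁ k₂ a : ℕ → ℝ) (b : ℝ)
    (hk₁ : ∀ N : ℕ, k₁ N = N * π / 2)
    (hk₂ : ∀ N : ℕ, k₂ N = 4 * N * (1 - π ^ 2 / 16))
    (ha : ∀ N : ℕ, a N = (k₁ N) ^ 2 / k₂ N - 1)
    (hb : ∀ N : ℕ, 1 ≤ N → b = k₂ N / k₁ N)
    (C : ℕ → ℝ)
    (hC : ∀ N : ℕ, C N = ∫ y in Ioi (0 : ℝ),
      Real.logb 2 (1 + ρ * y ^ 2) *
        (y ^ a N * Real.exp (-y / b) / (b ^ (a N + 1) * Real.Gamma (a N + 1)))) :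
    Tendsto (fun N : ℕ => C (2 * N) - C N) atTop (𝓝 2) := by
  have hπ : π ^ 2 < 16 := by nlinarith [pi_pos, pi_lt_four]
  set c := π ^ 2 / (16 - π ^ 2)
  have hc : 0 < c := div_pos (by positivity) (by linarith)
  have hb₀ : 0 < b := by
    rw [hb 1 le_rfl, hk₁, hk₂]
    exact div_pos (by norm_num; linarith) (by positivity)
  have hshape : ∀ N : ℕ, 1 ≤ N → a N + 1 = c * N := by
    intro N hN
    have hN₀ : (N : ℝ) ≠ 0 := by positivity
    rw [ha, hk₁, hk₂]
    field_simp
    ring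
  have hC_eq : ∀ N : ℕ, C N = gammaCapacity ρ (a N + 1) b / log 2 := by
    intro N
    simp only [hC, gammaCapacity, gammaDensity, add_sub_cancel_right, logb, div_mul_eq_mul_div,
      integral_div]
  have hlim := ((tendsto_gammaCapacity_two_mul_sub hρ hb₀).comp
    (tendsto_natCast_atTop_atTop.const_mul_atTop hc)).div_const (log 2)
  rw [mul_div_cancel_right₀ _ (log_pos one_lt_two).ne'] at hlim
  refine hlim.congr' ?_
  filter_upwards [eventually_ge_atTop 1] with N hN
  rw [hC_eq, hC_eq, hshape N hN, hshape (2 * N) (by omega), Function.comp_apply, sub_div,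
    Nat.cast_mul, Nat.cast_ofNat, mul_left_comm]
end
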